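/- arXiv:2004.13774 — 5 statements merged into one kernel-verified Lean document; each statement's English description precedes it below -/
import Mathlib

section
/- Let q be a prime power, l ≥ 1 an integer, r_1, …, r_l ≥ 1 integers, and α_1, …, α_l pairwise distinct elements of 𝔽_q^*. Then the number of tuples (x^{(i)}_j)_{1 ≤ i ≤ l, 1 ≤ j ≤ r_i} with all entries in 𝔽_q^*, satisfying ∑_{i=1}^l ∑_{j=1}^{r_i} x^{(i)}_j = 0 and ∑_{i=1}^l α_i (∑_{j=1}^{r_i} x^{(i)}_j) = 0, equals A_{r_1,…,r_l}. In particular, this number does not depend on the choice of the pairwise distinct nonzero elements α_1, …, α_l. -/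
/-- `ψ_s = ((q-1)^s + (-1)^s (q-1))/q` (an exact integer division). -/
def psi (q s : ℕ) : ℤ := (((q : ℤ) - 1) ^ s + (-1) ^ s * ((q : ℤ) - 1)) / (q : ℤ)

/-- `φ_s = ((q-1)^s - ψ_s)/(q-1)` (an exact integer division). -/
def phi (q s : ℕ) : ℤ := (((q : ℤ) - 1) ^ s - psi q s) / ((q : ℤ) - 1)

/-- Auxiliary recursion for `A_{r_1,…,r_l}`, taking the list in reversed order
`[r_l, r_{l-1}, …, r_1]`. -/
def Arev (q : ℕ) : List ℕ → ℤ
  | [] => 0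
  | [r] => psi q r
  | r :: rs => psi q rs.sum * phi q r + (-1) ^ r * Arev q rs

/-- `A_{r_1,…,r_l}` for the list `[r_1, …, r_l]`:
`A_{r_1} = ψ_{r_1}` and `A_{r_1,…,r_m} = ψ_{r_1+⋯+r_{m-1}} φ_{r_m} + (-1)^{r_m} A_{r_1,…,r_{m-1}}`. -/
def Atup (q : ℕ) (l : List ℕ) : ℤ := Arev q l.reverse

/-!
Write `N(s)` for the number of `x ∈ (𝔽_q^*)^n` with `∑ wᵢ xᵢ = s`, where all `wᵢ ≠ 0`. Scaling
`x ↦ c x` shows that `N(s)` does not depend on `s ≠ 0`, and solving for the last coordinate gives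
`N_{n+1}(0) = (q-1)^n - N_n(0)`; hence `N(0) = ψ_n` and `N(s) = φ_n` for `s ≠ 0`.

For the theorem, split off the last block `y = x^{(l)}` and subtract `α_l` times the first equation
from the second: the system becomes `∑_{i<l} (α_i - α_l) ∑_j x^{(i)}_j = 0` together with
`∑_j y_j = -∑_{i<l} ∑_j x^{(i)}_j`. The first equation has nonzero weights, so it has
`ψ_{r_1+⋯+r_{l-1}}` solutions; over each of them there are `ψ_{r_l}` or `φ_{r_l}` choices of `y`
according as `∑_{i<l} ∑_j x^{(i)}_j` vanishes or not, and the solutions where it vanishes are those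
of the same system with `l - 1` blocks. Since `ψ_r - φ_r = (-1)^r`, this is the recursion defining
`A_{r_1,…,r_l}`.
-/

open Finset

section PsiPhi

variable {q : ℕ}

lemma natCast_dvd_sub_one_pow_sub_neg_one_pow (q s : ℕ) :
    (q : ℤ) ∣ ((q : ℤ) - 1) ^ s - (-1) ^ s := by
  simpa using sub_dvd_pow_sub_pow ((q : ℤ) - 1) (-1) s

lemma natCast_mul_psi (q s : ℕ) :
    (q : ℤ) * psi q s = ((q : ℤ) - 1) ^ s + (-1) ^ s * ((q : ℤ) - 1) := by
  refine Int.mul_ediv_cancel' ?_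
  rw [show ((q : ℤ) - 1) ^ s + (-1) ^ s * ((q : ℤ) - 1)
      = ((q : ℤ) - 1) ^ s - (-1) ^ s + (-1) ^ s * q by ring]
  exact dvd_add (natCast_dvd_sub_one_pow_sub_neg_one_pow q s) (dvd_mul_left _ _)

lemma psi_zero (hq : q ≠ 0) : psi q 0 = 1 := by
  simp [psi, Int.ediv_self (Int.natCast_ne_zero.mpr hq)]

lemma psi_succ (hq : q ≠ 0) (s : ℕ) : psi q (s + 1) = ((q : ℤ) - 1) ^ s - psi q s := by
  apply mul_left_cancel₀ (Int.natCast_ne_zero.mpr hq)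
  rw [natCast_mul_psi, mul_sub (q : ℤ), natCast_mul_psi]
  ring

lemma psi_sub_phi (hq : 1 < q) (s : ℕ) : psi q s - phi q s = (-1) ^ s := by
  have hq0 : (q : ℤ) ≠ 0 := by omega
  have hq1 : (q : ℤ) - 1 ≠ 0 := by omega
  obtain ⟨k, hk⟩ := natCast_dvd_sub_one_pow_sub_neg_one_pow q s
  have hpsi : psi q s = k + (-1) ^ s := by
    rw [psi, show ((q : ℤ) - 1) ^ s + (-1) ^ s * ((q : ℤ) - 1) = q * (k + (-1) ^ s) by
      linear_combination hk, Int.mul_ediv_cancel_left _ hq0]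
  have hphi : phi q s = k := by
    rw [phi, hpsi, show ((q : ℤ) - 1) ^ s - (k + (-1) ^ s) = ((q : ℤ) - 1) * k by
      linear_combination hk, Int.mul_ediv_cancel_left _ hq1]
  rw [hpsi, hphi, add_sub_cancel_left]

end PsiPhi

lemma natCard_subtype_snoc_eq {n : ℕ} {α : Fin (n + 1) → Type*} [∀ i, Fintype (α i)]
    (C : (∀ i, α i) → Prop) (P g : (∀ i : Fin n, α i.castSucc) → Prop)
    (Q : (∀ i : Fin n, α i.castSucc) → α (Fin.last n) → Prop)
    (hC : ∀ x y, C (Fin.snoc x y) ↔ P x ∧ Q x y) {c₁ c₂ : ℤ}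
    (hQ₁ : ∀ x, P x → g x → (Nat.card {y // Q x y} : ℤ) = c₁)
    (hQ₂ : ∀ x, P x → ¬g x → (Nat.card {y // Q x y} : ℤ) = c₂) :
    (Nat.card {x // C x} : ℤ)
      = c₂ * Nat.card {x // P x} + (c₁ - c₂) * Nat.card {x // P x ∧ g x} := by
  classical
  let e : {x // C x} ≃ Σ x : (∀ i : Fin n, α i.castSucc), {y // P x ∧ Q x y} :=
    ((Fin.snocEquiv α).subtypeEquiv fun _ => Iff.rfl).symm.trans <|
      (Equiv.subtypeEquivRight fun z : α (Fin.last n) × _ => hC z.2 z.1).trans <|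
      ((Equiv.prodComm _ _).subtypeEquiv fun _ => Iff.rfl).trans <|
      Equiv.subtypeProdEquivSigmaSubtype fun x y => P x ∧ Q x y
  have hfiber (x : ∀ i : Fin n, α i.castSucc) : (Nat.card {y // P x ∧ Q x y} : ℤ)
      = c₂ * (if P x then 1 else 0) + (c₁ - c₂) * (if P x ∧ g x then 1 else 0) := by
    by_cases hP : P x
    · by_cases hg : g x
      · simpa [hP, hg] using hQ₁ x hP hg
      · simpa [hP, hg] using hQ₂ x hP hg
    · simp [hP]
  rw [Nat.card_congr e, Nat.card_sigma, Nat.cast_sum, sum_congr rfl fun x _ => hfiber x,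
    sum_add_distrib, ← mul_sum, ← mul_sum, sum_boole,
    sum_boole, Nat.card_eq_fintype_card, Nat.card_eq_fintype_card, Fintype.card_subtype,
    Fintype.card_subtype]

section WeightedSums

variable {F : Type*} [Field F]

lemma natCard_weighted_sum_mul (ι : Type*) [Fintype ι] (w : ι → F) {c : F} (hc : c ≠ 0)
    (s : F) :
    Nat.card {x : ι → F // (∀ i, x i ≠ 0) ∧ ∑ i, w i * x i = c * s}
      = Nat.card {x : ι → F // (∀ i, x i ≠ 0) ∧ ∑ i, w i * x i = s} := by
  refine (Nat.card_congr
    ((Equiv.piCongrRight fun _ => Equiv.mulLeft₀ c hc).subtypeEquiv fun x => ?_)).symm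
  simp [hc, mul_left_comm _ c, ← mul_sum]

lemma natCard_ne_zero_and_add_mul_eq_zero {S c : F} (hS : S ≠ 0) (hc : c ≠ 0) :
    Nat.card {y : F // y ≠ 0 ∧ S + c * y = 0} = 1 :=
  Nat.card_eq_one_iff_exists.mpr
    ⟨⟨-S / c, div_ne_zero (neg_ne_zero.mpr hS) hc, by field_simp; ring⟩, fun y =>
      Subtype.ext <| (eq_div_iff hc).mpr <| by linear_combination y.2.2⟩

variable [Fintype F] {q : ℕ}

lemma natCard_forall_ne_zero (ι : Type*) [Fintype ι] :
    Nat.card {x : ι → F // ∀ i, x i ≠ 0} = (Fintype.card F - 1) ^ Fintype.card ι := by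
  classical
  rw [Nat.card_congr (Equiv.subtypePiEquivPi (p := fun _ (y : F) => y ≠ 0)), Nat.card_pi,
    ← Nat.card_congr (unitsEquivNeZero (G₀ := F)), Nat.card_eq_fintype_card, Fintype.card_units]
  simp

lemma natCard_weighted_sum_zero_eq_psi_fin (hF : Fintype.card F = q) (n : ℕ) (w : Fin n → F)
    (hw : ∀ i, w i ≠ 0) :
    (Nat.card {x : Fin n → F // (∀ i, x i ≠ 0) ∧ ∑ i, w i * x i = 0} : ℤ) = psi q n := by
  have hq : q ≠ 0 := hF ▸ Fintype.card_ne_zero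
  induction n with
  | zero => simp [psi_zero hq]
  | succ n ih =>
    rw [natCard_subtype_snoc_eq _ (fun x => ∀ i, x i ≠ 0)
      (fun x => ∑ i, w i.castSucc * x i = 0)
      (fun x y => y ≠ 0 ∧ ∑ i, w i.castSucc * x i + w (Fin.last n) * y = 0)
      (c₁ := 0) (c₂ := 1) ?hC ?hQ₁ ?hQ₂, natCard_forall_ne_zero, ih _ fun i => hw _, psi_succ hq,
      hF, Fintype.card_fin]
    · push_cast [Nat.cast_sub (hF ▸ Fintype.card_pos : 1 ≤ q)]
      ring
    case hC =>
      intro x y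
      simp [Fin.forall_fin_succ', Fin.sum_univ_castSucc, and_assoc]
    case hQ₁ =>
      intro x _ hS
      simp [hS, hw]
    case hQ₂ =>
      intro x _ hS
      exact_mod_cast natCard_ne_zero_and_add_mul_eq_zero hS (hw (Fin.last n))

lemma natCard_weighted_sum_zero_eq_psi {ι : Type*} [Fintype ι] (hF : Fintype.card F = q)
    (w : ι → F) (hw : ∀ i, w i ≠ 0) :
    (Nat.card {x : ι → F // (∀ i, x i ≠ 0) ∧ ∑ i, w i * x i = 0} : ℤ)
      = psi q (Fintype.card ι) := by
  let e := Fintype.equivFin ι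
  rw [← natCard_weighted_sum_zero_eq_psi_fin hF _ (w ∘ e.symm) fun i => hw _]
  congr 1
  refine Nat.card_congr ((e.arrowCongr (.refl F)).subtypeEquiv fun x => ?_)
  simp [Equiv.arrowCongr_apply, e.symm.forall_congr_left,
    Equiv.sum_comp e.symm fun i => w i * x i]

lemma natCard_weighted_sum_eq_phi {ι : Type*} [Fintype ι] (hF : Fintype.card F = q)
    (w : ι → F) (hw : ∀ i, w i ≠ 0) {s : F} (hs : s ≠ 0) :
    (Nat.card {x : ι → F // (∀ i, x i ≠ 0) ∧ ∑ i, w i * x i = s} : ℤ)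
      = phi q (Fintype.card ι) := by
  classical
  set N : F → ℕ := fun t => Nat.card {x : ι → F // (∀ i, x i ≠ 0) ∧ ∑ i, w i * x i = t}
  have hN (t : F) (ht : t ≠ 0) : N t = N s := by
    simpa [N, div_mul_cancel₀ _ hs] using natCard_weighted_sum_mul ι w (div_ne_zero ht hs) s
  have htotal : Nat.card {x : ι → F // ∀ i, x i ≠ 0} = ∑ t, N t := by
    rw [← Nat.card_sigma]
    exact Nat.card_congr ((Equiv.sigmaFiberEquiv fun x : {x : ι → F // ∀ i, x i ≠ 0} =>
      ∑ i, w i * x.1 i).symm.trans (Equiv.sigmaCongrRight fun t =>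
        Equiv.subtypeSubtypeEquivSubtypeInter (fun x : ι → F => ∀ i, x i ≠ 0)
          fun x => ∑ i, w i * x i = t))
  have hsplit : ∑ t, N t = N 0 + (q - 1) * N s := by
    rw [← add_sum_erase _ _ (mem_univ 0), sum_congr rfl fun t ht => hN t (ne_of_mem_erase ht),
      sum_const, card_erase_of_mem (mem_univ 0), card_univ, hF, smul_eq_mul]
  have hq : 1 ≤ q := hF ▸ Fintype.card_pos
  have hq1 : (q : ℤ) - 1 ≠ 0 := by
    have : 2 ≤ q := hF ▸ Fintype.one_lt_card
    omega
  have hcount :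
      ((q : ℤ) - 1) ^ Fintype.card ι = psi q (Fintype.card ι) + ((q : ℤ) - 1) * N s := by
    rw [← natCard_weighted_sum_zero_eq_psi hF w hw]
    have := congrArg (Nat.cast : ℕ → ℤ) (htotal.trans hsplit)
    push_cast [natCard_forall_ne_zero, hF, Nat.cast_sub hq] at this
    exact this
  rw [phi, hcount, add_sub_cancel_left, Int.mul_ediv_cancel_left _ hq1]

end WeightedSums

section Solutions

variable {F : Type*} [Field F] [Fintype F] {q : ℕ}

lemma natCard_weighted_double_sum_zero_eq_psi {ι : Type*} [Fintype ι] {κ : ι → Type*}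
    [∀ i, Fintype (κ i)] (hF : Fintype.card F = q) (c : ι → F) (hc : ∀ i, c i ≠ 0) :
    (Nat.card {x : (i : ι) → κ i → F // (∀ i j, x i j ≠ 0) ∧ ∑ i, c i * ∑ j, x i j = 0} : ℤ)
      = psi q (∑ i, Fintype.card (κ i)) := by
  rw [← Fintype.card_sigma, ← natCard_weighted_sum_zero_eq_psi hF (fun p : Σ i, κ i => c p.1)
    fun p => hc p.1]
  congr 1
  refine Nat.card_congr ((Equiv.piCurry fun _ _ => F).symm.subtypeEquiv fun x => ?_)
  simp [Fintype.sum_sigma, mul_sum, Sigma.uncurry, Sigma.forall]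

abbrev NonzeroSolutions {l : ℕ} (r : Fin l → ℕ) (α : Fin l → F) : Type _ :=
  {x : (i : Fin l) → Fin (r i) → F //
    (∀ i j, x i j ≠ 0) ∧ (∑ i, ∑ j, x i j) = 0 ∧ (∑ i, α i * ∑ j, x i j) = 0}

lemma natCard_nonzeroSolutions_snoc (hF : Fintype.card F = q) {n : ℕ} (r : Fin (n + 1) → ℕ)
    (α : Fin (n + 1) → F) (hα : Function.Injective α) :
    (Nat.card (NonzeroSolutions r α) : ℤ)
      = psi q (∑ i : Fin n, r i.castSucc) * phi q (r (Fin.last n))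
        + (-1) ^ r (Fin.last n) * Nat.card
          (NonzeroSolutions (fun i : Fin n => r i.castSucc) fun i => α i.castSucc) := by
  set a := α (Fin.last n)
  have hV (x : (i : Fin n) → Fin (r i.castSucc) → F) :
      ∑ i, (α i.castSucc - a) * ∑ j, x i j
        = ∑ i, α i.castSucc * ∑ j, x i j - a * ∑ i, ∑ j, x i j := by
    simp [sub_mul, sum_sub_distrib, mul_sum]
  rw [natCard_subtype_snoc_eq (α := fun i => Fin (r i) → F) _
    (fun x => (∀ i j, x i j ≠ 0) ∧ ∑ i, (α i.castSucc - a) * ∑ j, x i j = 0)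
    (fun x => ∑ i, ∑ j, x i j = 0)
    (fun x y => (∀ j, y j ≠ 0) ∧ ∑ j, y j = -∑ i, ∑ j, x i j)
    (c₁ := psi q (r (Fin.last n))) (c₂ := phi q (r (Fin.last n))) ?hC ?hQ₁ ?hQ₂,
    natCard_weighted_double_sum_zero_eq_psi hF _
      fun i => sub_ne_zero.2 (hα.ne (Fin.castSucc_lt_last i).ne),
    psi_sub_phi (hF ▸ Fintype.one_lt_card)]
  · have hcount (x : (i : Fin n) → Fin (r i.castSucc) → F) :
        (((∀ i j, x i j ≠ 0) ∧ ∑ i, (α i.castSucc - a) * ∑ j, x i j = 0)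
            ∧ ∑ i, ∑ j, x i j = 0) ↔ (∀ i j, x i j ≠ 0) ∧ ∑ i, ∑ j, x i j = 0 ∧ ∑ i, α i.castSucc * ∑ j, x i j = 0 := by
      rw [hV]
      constructor
      · rintro ⟨⟨hx, hV0⟩, hT⟩
        exact ⟨hx, hT, by linear_combination hV0 + a * hT⟩
      · rintro ⟨hx, hT, hU⟩
        exact ⟨⟨hx, by linear_combination hU - a * hT⟩, hT⟩
    rw [Nat.card_congr (Equiv.subtypeEquivRight hcount)]
    simp only [Fintype.card_fin]
    ring
  case hC =>
    intro x y
    simp only [Fin.forall_fin_succ', Fin.sum_univ_castSucc, Fin.snoc_castSucc, Fin.snoc_last]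
    rw [hV]
    constructor
    · rintro ⟨⟨hx, hy⟩, hT, hU⟩
      exact ⟨⟨hx, by linear_combination hU - a * hT⟩, hy, by linear_combination hT⟩
    · rintro ⟨⟨hx, hV0⟩, hy, hY⟩
      exact ⟨⟨hx, hy⟩, by linear_combination hY, by linear_combination hV0 + a * hY⟩
  case hQ₁ =>
    intro x _ hg
    simpa [hg] using natCard_weighted_sum_zero_eq_psi (ι := Fin (r (Fin.last n))) hF
      (fun _ => (1 : F)) fun _ => one_ne_zero
  case hQ₂ =>
    intro x _ hg
    simpa using natCard_weighted_sum_eq_phi (ι := Fin (r (Fin.last n))) hF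
      (fun _ => (1 : F)) (fun _ => one_ne_zero) (neg_ne_zero.2 hg)

end Solutions

section Atup

variable {q : ℕ}

lemma Atup_ofFn_one (r : Fin 1 → ℕ) : Atup q (List.ofFn r) = psi q (r 0) := by
  simp [Atup, Arev]

lemma Atup_ofFn_succ {n : ℕ} (r : Fin (n + 2) → ℕ) :
    Atup q (List.ofFn r)
      = psi q (∑ i : Fin (n + 1), r i.castSucc) * phi q (r (Fin.last _))
        + (-1) ^ r (Fin.last _) * Atup q (List.ofFn fun i : Fin (n + 1) => r i.castSucc) := by
  obtain ⟨b, t, h⟩ := List.exists_cons_of_ne_nil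
    (l := (List.ofFn fun i : Fin (n + 1) => r i.castSucc).reverse) (by simp)
  have hsum : (List.ofFn fun i : Fin (n + 1) => r i.castSucc).reverse.sum
      = ∑ i : Fin (n + 1), r i.castSucc := by
    rw [List.sum_reverse, List.sum_ofFn]
  rw [Atup, Atup, List.ofFn_succ', List.concat_eq_append, List.reverse_append,
    List.reverse_singleton, List.singleton_append, ← hsum, h]
  rfl

end Atup

theorem natCard_nonzeroSolutions_eq_Atup {F : Type*} [Field F] [Fintype F] {q : ℕ}
    (hF : Fintype.card F = q) (n : ℕ) (r : Fin (n + 1) → ℕ) (α : Fin (n + 1) → F)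
    (hα : Function.Injective α) :
    (Nat.card (NonzeroSolutions r α) : ℤ) = Atup q (List.ofFn r) := by
  induction n with
  | zero =>
    rw [natCard_nonzeroSolutions_snoc hF r α hα]
    have hsol : Nat.card (NonzeroSolutions (fun i : Fin 0 => r i.castSucc) fun i => α i.castSucc)
        = 1 := by
      simp
    simp only [hsol, Atup_ofFn_one, univ_eq_empty, sum_empty, Fin.last_zero, one_mul,
      Nat.cast_one, mul_one, psi_zero (hF ▸ Fintype.card_ne_zero : q ≠ 0)]
    linear_combination -psi_sub_phi (hF ▸ Fintype.one_lt_card) (r 0)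
  | succ n ih =>
    rw [natCard_nonzeroSolutions_snoc hF r α hα, Atup_ofFn_succ,
      ← ih (fun i => r i.castSucc) (fun i => α i.castSucc) (hα.comp (Fin.castSucc_injective _))]

theorem stmt4_general (q : ℕ) (F : Type*) [Field F] [Fintype F] (hF : Fintype.card F = q)
    (l : ℕ) (hl : 1 ≤ l) (r : Fin l → ℕ)
    (α : Fin l → F) (hαinj : Function.Injective α) :
    (Nat.card {x : (i : Fin l) → Fin (r i) → F //
        (∀ i j, x i j ≠ 0) ∧ (∑ i, ∑ j, x i j) = 0 ∧ (∑ i, α i * ∑ j, x i j) = 0} : ℤ)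
      = Atup q (List.ofFn r) := by
  obtain ⟨n, rfl⟩ : ∃ n, l = n + 1 := ⟨l - 1, by omega⟩
  exact natCard_nonzeroSolutions_eq_Atup hF n r α hαinj

theorem stmt4 (q : ℕ) (F : Type*) [Field F] [Fintype F] (hF : Fintype.card F = q)
    (l : ℕ) (hl : 1 ≤ l) (r : Fin l → ℕ) (hr : ∀ i, 1 ≤ r i)
    (α : Fin l → F) (hαinj : Function.Injective α) (hα0 : ∀ i, α i ≠ 0) :
    (Nat.card {x : (i : Fin l) → Fin (r i) → F //
        (∀ i j, x i j ≠ 0) ∧ (∑ i, ∑ j, x i j) = 0 ∧ (∑ i, α i * ∑ j, x i j) = 0} : ℤ)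
      = Atup q (List.ofFn r) :=
  stmt4_general q F hF l hl r α hαinj
end

section
/- Let q > 5 be an odd prime power and let 3 ≤ h ≤ k be integers, and let D_2 = { x ∈ 𝔽_q^k \ {0} : x_i + x_j = 0 for some 1 ≤ i < j ≤ h }. Then: (i) for every 1 ≤ i < j ≤ h, the hyperplane {x ∈ 𝔽_q^k : x_i + x_j = 0} contains exactly q^{k−1} − 1 points of D_2; (ii) for every nonzero α ∈ 𝔽_q^k that is not of the form λ(e_i + e_j) for some λ ∈ 𝔽_q^* and 1 ≤ i < j ≤ h (e_i denoting the i-th standard basis vector), one has #{ x ∈ D_2 : ⟨α,x⟩ = 0 } < q^{k−1} − 1. Consequently the minimum weight of the code C_{D_2} is attained exactly by the hyperplanes x_i + x_j = 0 with 1 ≤ i < j ≤ h. -/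
/-!
Every nonzero point of the hyperplane `x i + x j = 0` lies in `D₂`, so (i) is the count
`q ^ (k - 1) - 1` of nonzero points of a hyperplane. For (ii) it suffices to find one nonzero
`x ⊥ α` outside `D₂`, i.e. with `x i + x j ≠ 0` for all `i < j < h`. Starting from the all-ones
vector (whose pair sums are `2 ≠ 0`), the single linear condition is met by changing one
coordinate `a` with `α a ≠ 0`: one outside the first `h`, or one with `⟨α, 1⟩ ≠ 2 α a`. If no
such `a` exists, `α` equals a constant `c` on its support `T ⊆ [0, h)` and `⟨α, 1⟩ = 2c`. Then
`|T| = 1` is impossible, `|T| = 2` is the excluded case `α = c (e_a + e_b)`, and for `|T| ≥ 3`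
the entries at three points of `T` are replaced by `u, u, 1 - 2u` with `u ∉ {0, 1, -1}`.
-/

open Function Matrix

theorem Pairwise.update_add_ne_zero {ι M : Type*} [DecidableEq ι] [AddCommMonoid M]
    {x : ι → M} (hx : Pairwise fun i j => x i + x j ≠ 0) {d : ι} {t : M}
    (ht : ∀ i, i ≠ d → x i + t ≠ 0) :
    Pairwise fun i j => update x d t i + update x d t j ≠ 0 := by
  intro i j hij
  rcases eq_or_ne i d with rfl | hi
  · simpa [update_of_ne hij.symm, add_comm] using ht j hij.symm
  rcases eq_or_ne j d with rfl | hj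
  · simpa [update_of_ne hi] using ht i hi
  · simpa [update_of_ne hi, update_of_ne hj] using hx hij

theorem dotProduct_update {R ι : Type*} [CommRing R] [Fintype ι] [DecidableEq ι] (α x : ι → R)
    (d : ι) (t : R) :
    α ⬝ᵥ update x d t = α ⬝ᵥ x + α d * (t - x d) := by
  rw [Pi.update_eq_sub_add_single, dotProduct_add, dotProduct_sub, dotProduct_single,
    dotProduct_single]
  ring

theorem exists_ne_zero_ne_one_ne_neg_one {F : Type*} [Field F] [Fintype F]
    (hF : 3 < Fintype.card F) :
    ∃ u : F, u ≠ 0 ∧ u ≠ 1 ∧ u ≠ -1 := by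
  classical
  obtain ⟨u, -, hu⟩ := Finset.exists_mem_notMem_of_card_lt_card
    ((Finset.card_le_three (a := (0 : F)) (b := 1) (c := -1)).trans_lt hF)
  simp only [Finset.mem_insert, Finset.mem_singleton, not_or] at hu
  exact ⟨u, hu⟩

theorem card_mem_and_dotProduct_eq_zero_lt_card {R ι : Type*} [Semiring R] [Finite R]
    [Fintype ι] {α : ι → R} {D : Set (ι → R)}
    (hD : ∀ x ∈ D, x ≠ 0) {z : ι → R} (hz0 : z ≠ 0) (hz : α ⬝ᵥ z = 0) (hzD : z ∉ D) :
    Nat.card {x // x ∈ D ∧ α ⬝ᵥ x = 0} < Nat.card {x // x ≠ 0 ∧ α ⬝ᵥ x = 0} := by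
  refine Set.card_strictMono ((Set.ssubset_iff_of_subset fun x hx => ?_).2
    ⟨z, ⟨hz0, hz⟩, fun h => hzD h.1⟩)
  exact ⟨hD x hx.1, hx.2⟩

section

variable {F ι : Type*} [Field F] [Fintype ι] [DecidableEq ι] {α : ι → F}

theorem card_dotProduct_eq_zero [Fintype F] (hα : α ≠ 0) :
    Nat.card {x : ι → F // α ⬝ᵥ x = 0} = Fintype.card F ^ (Fintype.card ι - 1) := by
  classical
  have hrank := Module.Dual.finrank_ker_add_one_of_ne_zero
    ((LinearEquiv.map_ne_zero_iff (dotProductEquiv F ι)).2 hα)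
  rw [Module.finrank_fintype_fun_eq_card] at hrank
  change Nat.card (LinearMap.ker (dotProductEquiv F ι α)) = _
  rw [Nat.card_eq_fintype_card, Module.card_eq_pow_finrank (K := F), ← hrank, Nat.add_sub_cancel]

theorem card_ne_zero_and_dotProduct_eq_zero [Fintype F] (hα : α ≠ 0) :
    Nat.card {x : ι → F // x ≠ 0 ∧ α ⬝ᵥ x = 0} = Fintype.card F ^ (Fintype.card ι - 1) - 1 := by
  classical
  have h0 : (0 : ι → F) ∈ Finset.univ.filter (α ⬝ᵥ · = 0) := by simp
  rw [← card_dotProduct_eq_zero hα, Nat.card_eq_fintype_card, Nat.card_eq_fintype_card,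
    Fintype.card_subtype, Fintype.card_subtype, ← Finset.card_erase_of_mem h0]
  congr 1
  ext x
  simp [and_comm]

theorem card_ne_zero_and_add_eq_zero [Fintype F] {i j : ι} (hij : i ≠ j) :
    Nat.card {x : ι → F // x ≠ 0 ∧ x i + x j = 0} =
      Fintype.card F ^ (Fintype.card ι - 1) - 1 := by
  have hβ0 : (Pi.single i 1 + Pi.single j 1 : ι → F) ≠ 0 := fun h0 => by
    simpa [hij] using congrFun h0 i
  rw [← card_ne_zero_and_dotProduct_eq_zero hβ0]
  simp [add_dotProduct, single_dotProduct]

theorem dotProduct_update_one_eq_zero {a : ι} (ha : α a ≠ 0) :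
    α ⬝ᵥ update 1 a (1 - α ⬝ᵥ 1 / α a) = 0 := by
  rw [dotProduct_update, Pi.one_apply]
  field_simp
  ring

theorem exists_dotProduct_eq_zero_pairwise_of_ne_two_mul (h2 : (2 : F) ≠ 0) {a : ι}
    (ha : α a ≠ 0) (hS : α ⬝ᵥ 1 ≠ 2 * α a) :
    ∃ x, α ⬝ᵥ x = 0 ∧ Pairwise fun i j => x i + x j ≠ 0 := by
  refine ⟨_, dotProduct_update_one_eq_zero ha, Pairwise.update_add_ne_zero ?_ fun i _ => ?_⟩
  · intro i j _
    simpa [one_add_one_eq_two] using h2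
  · rw [Pi.one_apply]
    intro h
    apply hS
    field_simp at h
    linear_combination -h

theorem exists_dotProduct_eq_zero_pairwise_of_three (h2 : (2 : F) ≠ 0) {u : F} (hu0 : u ≠ 0)
    (hu1 : u ≠ 1) (hu_neg : u ≠ -1) {a b d : ι} (hab : a ≠ b) (had : a ≠ d) (hbd : b ≠ d)
    (hb : α b = α a) (hd : α d = α a) (hS : α ⬝ᵥ 1 = 2 * α a) :
    ∃ x, α ⬝ᵥ x = 0 ∧ Pairwise fun i j => x i + x j ≠ 0 := by
  set g : ι → F := update (update 1 a u) b u with hg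
  have hg_mem : ∀ i, g i = 1 ∨ g i = u := by
    intro i
    simp only [hg, update_apply, Pi.one_apply]
    split_ifs <;> simp
  have h1u : 1 + u ≠ 0 := fun h => hu_neg (by linear_combination h)
  have huu : u + u ≠ 0 := by rw [← two_mul]; exact mul_ne_zero h2 hu0
  have hsub : 1 - u ≠ 0 := sub_ne_zero.2 hu1.symm
  refine ⟨update g d (1 - 2 * u), ?_, Pairwise.update_add_ne_zero ?_ fun i _ => ?_⟩
  · rw [dotProduct_update, hg, dotProduct_update, dotProduct_update]
    simp [update_of_ne hab.symm, update_of_ne had.symm, update_of_ne hbd.symm, hb, hd, hS]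
    ring
  · refine Pairwise.update_add_ne_zero (Pairwise.update_add_ne_zero ?_ ?_) ?_
    · intro i j _
      simpa [one_add_one_eq_two] using h2
    · intro i _
      exact h1u
    · intro i _
      rcases eq_or_ne i a with rfl | hia
      · simpa using huu
      · simpa [update_of_ne hia] using h1u
  · rcases hg_mem i with h | h <;> rw [h]
    · intro h'
      exact hsub (mul_left_cancel₀ h2 (by linear_combination h'))
    · intro h'
      exact hsub (by linear_combination h')

theorem exists_dotProduct_eq_zero_pairwise_add_ne_zero [Fintype F] (h2 : (2 : F) ≠ 0)
    (hF : 3 < Fintype.card F) (hα0 : α ≠ 0)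
    (hα : ∀ c : F, c ≠ 0 → ∀ a b : ι, a ≠ b → α ≠ c • (Pi.single a 1 + Pi.single b 1)) :
    ∃ x, α ⬝ᵥ x = 0 ∧ Pairwise fun i j => x i + x j ≠ 0 := by
  obtain ⟨a, ha⟩ : ∃ a, α a ≠ 0 := Function.ne_iff.1 hα0
  by_cases hS : ∃ a, α a ≠ 0 ∧ α ⬝ᵥ 1 ≠ 2 * α a
  · obtain ⟨a, ha, hS⟩ := hS
    exact exists_dotProduct_eq_zero_pairwise_of_ne_two_mul h2 ha hS
  push Not at hS
  have hconst : ∀ b, α b ≠ 0 → α b = α a := fun b hb =>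
    mul_left_cancel₀ h2 ((hS b hb).symm.trans (hS a ha))
  obtain ⟨b, hba, hb⟩ : ∃ b, b ≠ a ∧ α b ≠ 0 := by
    by_contra! h
    have hsum : α ⬝ᵥ 1 = α a := by
      rw [dotProduct_one, Finset.sum_eq_single a (fun b _ hb => h b hb) (by simp)]
    exact ha (by linear_combination hsum - hS a ha)
  -- `α ≠ α a • (e a + e b)` yields a third point `d` of the support
  obtain ⟨d, hd⟩ := Function.ne_iff.1 (hα (α a) ha a b hba.symm)
  have hda : d ≠ a := by rintro rfl; simp [hba] at hd
  have hdb : d ≠ b := by rintro rfl; simp [hba.symm, hconst d hb] at hd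
  have hd0 : α d ≠ 0 := by intro h0; simp [hda, hdb, h0] at hd
  obtain ⟨u, hu0, hu1, hu_neg⟩ := exists_ne_zero_ne_one_ne_neg_one hF
  exact exists_dotProduct_eq_zero_pairwise_of_three h2 hu0 hu1 hu_neg hba.symm hda.symm hdb.symm
    (hconst b hb) (hconst d hd0) (hS a ha)

theorem exists_dotProduct_eq_zero_setPairwise_add_ne_zero [Fintype F] (h2 : (2 : F) ≠ 0)
    (hF : 3 < Fintype.card F) (s : Set ι) (hα0 : α ≠ 0)
    (hα : ∀ c : F, c ≠ 0 → ∀ a ∈ s, ∀ b ∈ s, a ≠ b → α ≠ c • (Pi.single a 1 + Pi.single b 1)) :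
    ∃ x, α ⬝ᵥ x = 0 ∧ s.Pairwise fun i j => x i + x j ≠ 0 := by
  by_cases hout : ∃ m ∉ s, α m ≠ 0
  · obtain ⟨m, hm, hαm⟩ := hout
    refine ⟨_, dotProduct_update_one_eq_zero hαm, fun i hi j hj _ => ?_⟩
    dsimp only
    rw [update_of_ne (ne_of_mem_of_not_mem hi hm), update_of_ne (ne_of_mem_of_not_mem hj hm)]
    simpa [one_add_one_eq_two] using h2
  push Not at hout
  suffices hα' : ∀ c : F, c ≠ 0 → ∀ a b : ι, a ≠ b → α ≠ c • (Pi.single a 1 + Pi.single b 1) by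
    obtain ⟨x, hx, hpair⟩ := exists_dotProduct_eq_zero_pairwise_add_ne_zero h2 hF hα0 hα'
    exact ⟨x, hx, hpair.set_pairwise s⟩
  intro c hc a b hab hαc
  have hmem : ∀ i, α i = c → i ∈ s := fun i hi => by_contra fun his => hc (hi ▸ hout i his)
  exact hα c hc a (hmem a (by simp [hαc, hab])) b (hmem b (by simp [hαc, hab.symm])) hab hαc

end

theorem stmt10 (q : ℕ) (hq : 5 < q) (hodd : Odd q) (F : Type*) [Field F] [Fintype F]
    (hF : Fintype.card F = q)
    (k h : ℕ) (hh : 3 ≤ h) (hhk : h ≤ k)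
    (D2 : Set (Fin k → F))
    (hD2 : D2 = {x | x ≠ 0 ∧ ∃ i j : Fin k, (i : ℕ) < (j : ℕ) ∧ (j : ℕ) < h ∧ x i + x j = 0}) :
    -- (i)
    (∀ i j : Fin k, (i : ℕ) < (j : ℕ) → (j : ℕ) < h →
      Nat.card {x : Fin k → F // x ∈ D2 ∧ x i + x j = 0} = q ^ (k - 1) - 1)
    ∧
    -- (ii)
    (∀ α : Fin k → F, α ≠ 0 →
      (¬ ∃ (lam : F) (i j : Fin k), lam ≠ 0 ∧ (i : ℕ) < (j : ℕ) ∧ (j : ℕ) < h ∧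
          α = lam • (Pi.single i (1 : F) + Pi.single j (1 : F))) →
      Nat.card {x : Fin k → F // x ∈ D2 ∧ ∑ m, α m * x m = 0} < q ^ (k - 1) - 1) := by
  subst hF
  have mem_D2 : ∀ x, x ∈ D2 ↔ x ≠ 0 ∧ ∃ i j : Fin k, (i : ℕ) < j ∧ (j : ℕ) < h ∧ x i + x j = 0 :=
    fun x => by rw [hD2]; rfl
  have h2 : (2 : F) ≠ 0 := Ring.two_ne_zero fun hc =>
    Nat.not_even_iff_odd.2 hodd (Nat.even_iff.2 (FiniteField.even_card_iff_char_two.1 hc))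
  refine ⟨fun i j hij hjh => ?_, fun α hα hne => ?_⟩
  · refine (Nat.card_congr (Equiv.subtypeEquivRight fun x => ?_)).trans
      ((card_ne_zero_and_add_eq_zero (Fin.ne_of_lt hij)).trans (by rw [Fintype.card_fin]))
    rw [mem_D2]
    exact ⟨fun ⟨⟨hx0, _⟩, hx⟩ => ⟨hx0, hx⟩, fun ⟨hx0, hx⟩ => ⟨⟨hx0, i, j, hij, hjh, hx⟩, hx⟩⟩
  · obtain ⟨z, hz, hpair⟩ := exists_dotProduct_eq_zero_setPairwise_add_ne_zero h2 (by omega)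
      {i : Fin k | (i : ℕ) < h} hα fun c hc a ha b hb hab hαc => by
        rcases lt_or_gt_of_ne (Fin.val_ne_of_ne hab) with hlt | hlt
        · exact hne ⟨c, a, b, hc, hlt, hb, hαc⟩
        · exact hne ⟨c, b, a, hc, hlt, ha, by rw [hαc, add_comm]⟩
    have hzD : ∀ i j : Fin k, (i : ℕ) < j → (j : ℕ) < h → z i + z j ≠ 0 :=
      fun i j hij hjh => hpair (hij.trans hjh) hjh (Fin.ne_of_lt hij)
    have hz0 : z ≠ 0 := fun h0 =>
      hzD ⟨0, by omega⟩ ⟨1, by omega⟩ one_pos (show 1 < h by omega) (by simp [h0])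
    refine (card_mem_and_dotProduct_eq_zero_lt_card (fun x hx => ((mem_D2 x).1 hx).1) hz0 hz
      fun hzD2 => ?_).trans_eq
      ((card_ne_zero_and_dotProduct_eq_zero hα).trans (by rw [Fintype.card_fin]))
    obtain ⟨-, i, j, hij, hjh, hzij⟩ := (mem_D2 z).1 hzD2
    exact hzD i j hij hjh hzij
end

section
/- Let q be an odd prime power and let 3 ≤ h ≤ k be integers. Then the cardinality of D_3 = { x ∈ 𝔽_q^k \ {0} : x_i = 0 for some 1 ≤ i ≤ h, or x_i + x_j = 0 for some 1 ≤ i < j ≤ h } equals q^{k−h}·(q^h − Γ(h,q)) − 1. -/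
/-- `S(x,y)`: the number of surjective functions from a set of size `x` onto a set of size `y`. -/
noncomputable def numSurj (x y : ℕ) : ℕ := Nat.card {f : Fin x → Fin y // Function.Surjective f}

/-- `Γ(h,q) = ∑_{s=1}^{min(h,(q-1)/2)} ((q-1)(q-3)⋯(q-2s+1)/s!)·S(h,s)`
(the inner division is exact). -/
noncomputable def Gamma (q h : ℕ) : ℕ :=
  ∑ s ∈ Finset.Icc 1 (min h ((q - 1) / 2)),
    ((∏ t ∈ Finset.range s, (q - 1 - 2 * t)) / Nat.factorial s) * numSurj h s


/-!
Outside `D_3 ∪ {0}` lie exactly the vectors whose first `h` coordinates `y` satisfy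
`y i + y j ≠ 0` for all `i, j` (as `q` is odd, the case `i = j` says `y i ≠ 0`), the other `k - h`
coordinates being free. Such a `y` is a surjection from `Fin h` onto its image `S`, a set with
`a + b ≠ 0` for all `a, b ∈ S`; if `N s` counts these sets of size `s`, there are
`∑ₛ N s · S(h,s)` such `y`. Enumerating `S` gives `s! · N s = (q-1)(q-3)⋯(q-2s+1)`: the `t`-th
element must avoid `0` and `±` the `t` earlier ones.
-/

open Finset Function Pointwise

section Surjections

theorem numSurj_eq_natCard (ι β : Type*) [Fintype ι] [Fintype β] :
    numSurj (Fintype.card ι) (Fintype.card β) = Nat.card {f : ι → β // Surjective f} :=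
  Nat.card_congr <|
    (Equiv.arrowCongr (Fintype.equivFin ι).symm (Fintype.equivFin β).symm).subtypeEquiv fun f =>
      by simp [Equiv.arrowCongr, EquivLike.surjective_comp]

theorem numSurj_self (n : ℕ) : numSurj n n = n.factorial :=
  calc numSurj n n = Nat.card (Equiv.Perm (Fin n)) := Nat.card_congr
        { toFun f := Equiv.ofBijective f.1 ⟨Finite.injective_iff_surjective.2 f.2, f.2⟩
          invFun e := ⟨e, e.surjective⟩
          left_inv _ := rfl
          right_inv _ := Equiv.ext fun _ => rfl }
    _ = n.factorial := by rw [Nat.card_perm, Nat.card_eq_fintype_card, Fintype.card_fin]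

theorem numSurj_eq_zero_of_lt {n s : ℕ} (hs : n < s) : numSurj n s = 0 :=
  Nat.card_eq_zero.2 <| .inl ⟨fun f => absurd (Fintype.card_le_of_surjective _ f.2) (by simpa)⟩

theorem numSurj_zero_right {n : ℕ} (hn : n ≠ 0) : numSurj n 0 = 0 :=
  Nat.card_eq_zero.2 <| .inl ⟨fun f => (f.1 ⟨0, Nat.pos_of_ne_zero hn⟩).elim0⟩

variable {ι α : Type*} [Fintype ι] [DecidableEq ι] [Fintype α] [DecidableEq α]

theorem card_filter_image_univ_eq (S : Finset α) :
    #{y : ι → α | univ.image y = S} = numSurj (Fintype.card ι) #S := by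
  rw [← Fintype.card_coe S, numSurj_eq_natCard, ← Fintype.card_subtype, ← Nat.card_eq_fintype_card]
  refine Nat.card_congr
    { toFun y := ⟨fun i => ⟨y.1 i, y.2.subset (mem_image_of_mem _ (mem_univ i))⟩, fun a => ?_⟩
      invFun f := ⟨fun i => f.1 i, ?_⟩
      left_inv _ := rfl
      right_inv _ := rfl }
  · obtain ⟨i, -, hi⟩ := mem_image.1 (y.2.symm ▸ a.2 : (a : α) ∈ univ.image y.1)
    exact ⟨i, Subtype.ext hi⟩
  · ext a
    simp only [mem_image, mem_univ, true_and]
    exact ⟨by rintro ⟨i, rfl⟩; exact (f.1 i).2, fun ha => (f.2 ⟨a, ha⟩).imp fun _ h => by rw [h]⟩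

theorem card_filter_image_univ (p : Finset α → Prop) [DecidablePred p] :
    #{y : ι → α | p (univ.image y)} = ∑ S with p S, numSurj (Fintype.card ι) #S := by
  rw [card_eq_sum_card_fiberwise (f := fun y : ι → α => univ.image y) (t := {S | p S})
    fun y hy => by simpa using hy]
  refine sum_congr rfl fun S hS => ?_
  rw [← card_filter_image_univ_eq, filter_filter]
  congr 1
  exact filter_congr fun y _ => and_iff_right_of_imp fun h => h ▸ (mem_filter.1 hS).2

end Surjections

theorem eq_zero_of_add_self_eq_zero {G : Type*} [AddGroup G] (hG : Odd (Nat.card G)) {a : G}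
    (ha : a + a = 0) : a = 0 :=
  (nsmulCoprime (Nat.coprime_two_right.2 hG)).injective <| by simp [two_nsmul, ha]

section SumsNeZero

variable {G : Type*} [AddCommGroup G]

def SumsNeZero {ι : Type*} (w : ι → G) : Prop := ∀ i j, w i + w j ≠ 0

instance {ι : Type*} [Fintype ι] [DecidableEq G] (w : ι → G) : Decidable (SumsNeZero w) :=
  inferInstanceAs (Decidable (∀ i j, w i + w j ≠ 0))

theorem sumsNeZero_iff_of_lt {ι : Type*} [LinearOrder ι] (hG : Odd (Nat.card G)) (y : ι → G) :
    SumsNeZero y ↔ (∀ i, y i ≠ 0) ∧ ∀ i j, i < j → y i + y j ≠ 0 := by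
  refine ⟨fun hy => ⟨fun i hi => hy i i (by rw [hi, add_zero]), fun i j _ => hy i j⟩, ?_⟩
  rintro ⟨hzero, hlt⟩ i j
  rcases lt_trichotomy i j with hij | rfl | hij
  · exact hlt i j hij
  · exact fun h => hzero i (eq_zero_of_add_self_eq_zero hG h)
  · rw [add_comm]
    exact hlt j i hij

variable [DecidableEq G]

theorem forall_mem_image_add_ne_zero_iff {ι : Type*} [Fintype ι] (w : ι → G) :
    (∀ a ∈ univ.image w, ∀ b ∈ univ.image w, a + b ≠ 0) ↔ SumsNeZero w := by
  simp [SumsNeZero]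

theorem card_insert_zero_image_union_neg {s : ℕ} {w : Fin s → G} (hw : Injective w)
    (hsum : SumsNeZero w) : #(insert 0 (univ.image w ∪ -univ.image w)) = 2 * s + 1 := by
  have hdisj : Disjoint (univ.image w) (-univ.image w) := by
    simp only [disjoint_left, mem_image, mem_univ, true_and, mem_neg']
    rintro _ ⟨i, rfl⟩ ⟨j, hj⟩
    exact hsum j i (by rw [hj, neg_add_cancel])
  have hzero : (0 : G) ∉ univ.image w ∪ -univ.image w := by
    simp only [mem_union, mem_image, mem_univ, true_and, mem_neg', neg_zero, or_self]
    rintro ⟨i, hi⟩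
    exact hsum i i (by rw [hi, add_zero])
  rw [card_insert_of_notMem hzero, card_union_of_disjoint hdisj, card_neg,
    card_image_of_injective _ hw, card_univ, Fintype.card_fin, two_mul]

theorem injective_cons_and_sumsNeZero_iff (hG : Odd (Nat.card G)) {s : ℕ} (a : G)
    (w : Fin s → G) :
    (Injective (Fin.cons a w : Fin (s + 1) → G) ∧ SumsNeZero (Fin.cons a w : Fin (s + 1) → G)) ↔
      (Injective w ∧ SumsNeZero w) ∧ a ∉ insert 0 (univ.image w ∪ -univ.image w) := by
  have ha : a + a = 0 ↔ a = 0 := ⟨eq_zero_of_add_self_eq_zero hG, fun h => by rw [h, add_zero]⟩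
  simp only [SumsNeZero, Fin.cons_injective_iff, Fin.forall_fin_succ, Fin.cons_zero, Fin.cons_succ,
    mem_insert, mem_union, mem_image, mem_univ, true_and, mem_neg', Set.mem_range, ne_eq, ha,
    eq_neg_iff_add_eq_zero, add_comm a, forall_and, not_or, not_exists]
  tauto

variable [Fintype G]

theorem card_injective_sumsNeZero (hG : Odd (Fintype.card G)) (s : ℕ) :
    #{w : Fin s → G | Injective w ∧ SumsNeZero w} =
      ∏ t ∈ range s, (Fintype.card G - 1 - 2 * t) := by
  induction s with
  | zero => simp [SumsNeZero, injective_of_subsingleton]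
  | succ s ih =>
    rw [← Nat.card_eq_fintype_card] at hG
    let X (w : Fin s → G) := insert 0 (univ.image w ∪ -univ.image w)
    calc #{v : Fin (s + 1) → G | Injective v ∧ SumsNeZero v}
        = #(({w | Injective w ∧ SumsNeZero w} : Finset (Fin s → G)).sigma
            fun w => univ \ X w) := by
          refine card_nbij' (fun v => ⟨Fin.tail v, v 0⟩) (fun p => Fin.cons p.2 p.1) ?_ ?_
            (fun v _ => Fin.cons_self_tail v) fun _ _ => by simp
          · intro v hv
            rw [mem_coe, mem_filter, ← Fin.cons_self_tail v,
              injective_cons_and_sumsNeZero_iff hG] at hv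
            exact mem_sigma.2 ⟨mem_filter.2 ⟨mem_univ _, hv.2.1⟩, mem_sdiff.2 ⟨mem_univ _, hv.2.2⟩⟩
          · rintro ⟨w, a⟩ hp
            obtain ⟨hw, ha⟩ := mem_sigma.1 hp
            rw [mem_coe, mem_filter, injective_cons_and_sumsNeZero_iff hG]
            exact ⟨mem_univ _, (mem_filter.1 hw).2, (mem_sdiff.1 ha).2⟩
      _ = ∑ w ∈ {w | Injective w ∧ SumsNeZero w}, (Fintype.card G - 1 - 2 * s) := by
          rw [card_sigma]
          refine sum_congr rfl fun w hw => ?_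
          rw [mem_filter] at hw
          rw [card_univ_sdiff, card_insert_zero_image_union_neg hw.2.1 hw.2.2]
          omega
      _ = _ := by rw [sum_const, smul_eq_mul, ih, prod_range_succ]

theorem card_injective_sumsNeZero_eq_mul_factorial (s : ℕ) :
    #{w : Fin s → G | Injective w ∧ SumsNeZero w} =
      #{S : Finset G | #S = s ∧ ∀ a ∈ S, ∀ b ∈ S, a + b ≠ 0} * s.factorial := by
  have hw (w : Fin s → G) : Injective w ∧ SumsNeZero w ↔
      #(univ.image w) = s ∧ ∀ a ∈ univ.image w, ∀ b ∈ univ.image w, a + b ≠ 0 := by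
    rw [forall_mem_image_add_ne_zero_iff, ← Set.injOn_univ, ← coe_univ, ← card_image_iff,
      card_univ, Fintype.card_fin]
  calc #{w : Fin s → G | Injective w ∧ SumsNeZero w}
      = ∑ S : Finset G with #S = s ∧ ∀ a ∈ S, ∀ b ∈ S, a + b ≠ 0, numSurj s #S := by
        simpa only [Fintype.card_fin, ← hw] using card_filter_image_univ (ι := Fin s)
          fun S : Finset G => #S = s ∧ ∀ a ∈ S, ∀ b ∈ S, a + b ≠ 0
    _ = _ := by
        rw [sum_congr rfl fun S hS => by rw [(mem_filter.1 hS).2.1, numSurj_self], sum_const,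
          smul_eq_mul]

theorem card_sumsNeZero_eq_gamma (hG : Odd (Fintype.card G)) {h : ℕ} (hh : h ≠ 0) :
    #{y : Fin h → G | SumsNeZero y} = Gamma (Fintype.card G) h := by
  set N : ℕ → ℕ := fun s => #{S : Finset G | #S = s ∧ ∀ a ∈ S, ∀ b ∈ S, a + b ≠ 0}
  have hprod (s : ℕ) : ∏ t ∈ range s, (Fintype.card G - 1 - 2 * t) = N s * s.factorial := by
    rw [← card_injective_sumsNeZero hG, card_injective_sumsNeZero_eq_mul_factorial]
  have hN_zero {s : ℕ} (hs : (Fintype.card G - 1) / 2 < s) : N s = 0 := by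
    have : N s * s.factorial = 0 := by
      rw [← hprod]
      exact prod_eq_zero (mem_range.2 hs) (by obtain ⟨m, hm⟩ := hG; omega)
    simpa [Nat.factorial_ne_zero] using this
  calc #{y : Fin h → G | SumsNeZero y}
      = ∑ S : Finset G with ∀ a ∈ S, ∀ b ∈ S, a + b ≠ 0, numSurj h #S := by
        simpa only [Fintype.card_fin, forall_mem_image_add_ne_zero_iff] using
          card_filter_image_univ (ι := Fin h) fun S : Finset G => ∀ a ∈ S, ∀ b ∈ S, a + b ≠ 0
    _ = ∑ s ∈ range (Fintype.card G + 1), N s * numSurj h s := by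
        rw [← sum_fiberwise_of_maps_to' (g := fun S : Finset G => #S)
          fun S _ => mem_range.2 (Nat.lt_succ_of_le (card_le_univ S))]
        refine sum_congr rfl fun s _ => ?_
        rw [sum_const, smul_eq_mul, filter_filter]
        simp_rw [and_comm]
        rfl
    _ = ∑ s ∈ Icc 1 (min h ((Fintype.card G - 1) / 2)), N s * numSurj h s := by
        refine (sum_subset (fun s hs => ?_) fun s _ hs => ?_).symm
        · rw [mem_Icc] at hs
          rw [mem_range]
          omega
        · rw [mem_Icc, not_and_or, not_le, not_le, Nat.lt_one_iff, min_lt_iff] at hs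
          obtain rfl | hs | hs := hs
          · rw [numSurj_zero_right hh, mul_zero]
          · rw [numSurj_eq_zero_of_lt hs, mul_zero]
          · rw [hN_zero hs, zero_mul]
    _ = Gamma (Fintype.card G) h := by
        rw [Gamma]
        refine sum_congr rfl fun s _ => ?_
        rw [hprod, Nat.mul_div_cancel _ s.factorial_pos]

end SumsNeZero

theorem card_filter_castAdd {α : Type*} [Fintype α] [DecidableEq α] {m n : ℕ}
    (Q : (Fin m → α) → Prop) [DecidablePred Q] :
    #{x : Fin (m + n) → α | Q fun i => x (Fin.castAdd n i)} = #{y | Q y} * Fintype.card α ^ n := by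
  rw [← card_equiv (Fin.appendEquiv m n) (s := ({y | Q y} : Finset _) ×ˢ univ) fun p => by simp,
    card_product, card_univ, Fintype.card_fun, Fintype.card_fin]

theorem stmt11 (q : ℕ) (hodd : Odd q) (F : Type*) [Field F] [Fintype F]
    (hF : Fintype.card F = q)
    (k h : ℕ) (hh : 3 ≤ h) (hhk : h ≤ k) :
    (Nat.card {x : Fin k → F // x ≠ 0 ∧
        ((∃ i : Fin k, (i : ℕ) < h ∧ x i = 0) ∨
          ∃ i j : Fin k, (i : ℕ) < (j : ℕ) ∧ (j : ℕ) < h ∧ x i + x j = 0)} : ℤ)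
      = (q : ℤ) ^ (k - h) * ((q : ℤ) ^ h - (Gamma q h : ℤ)) - 1 := by
  classical
  obtain ⟨n, rfl⟩ := Nat.exists_eq_add_of_le hhk
  rw [Nat.add_sub_cancel_left]
  set P : (Fin (h + n) → F) → Prop := fun x => (∃ i : Fin (h + n), (i : ℕ) < h ∧ x i = 0) ∨
    ∃ i j : Fin (h + n), (i : ℕ) < (j : ℕ) ∧ (j : ℕ) < h ∧ x i + x j = 0 with hP
  have hnotP (x : Fin (h + n) → F) : ¬P x ↔ SumsNeZero fun i : Fin h => x (Fin.castAdd n i) := by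
    rw [sumsNeZero_iff_of_lt (by rwa [Nat.card_eq_fintype_card, hF])]
    simp only [hP, not_or, not_exists, not_and]
    exact ⟨fun ⟨h0, h1⟩ => ⟨fun i => h0 _ i.2, fun i j hij => h1 _ _ hij j.2⟩,
      fun ⟨h0, h1⟩ => ⟨fun i hi => h0 ⟨i, hi⟩, fun i j hij hj => h1 ⟨i, hij.trans hj⟩ ⟨j, hj⟩ hij⟩⟩
  have hcompl : #{x | ¬P x} = Gamma q h * q ^ n := by
    rw [filter_congr fun x _ => hnotP x, card_filter_castAdd,
      card_sumsNeZero_eq_gamma (hF ▸ hodd) (by omega), hF]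
  have hnonzero : Nat.card {x // x ≠ 0 ∧ P x} + 1 = #{x | P x} := by
    have hP0 : P 0 := Or.inl ⟨⟨0, by omega⟩, by simp; omega, rfl⟩
    rw [Nat.card_eq_fintype_card, Fintype.card_subtype, ← card_erase_add_one
      (mem_filter.2 ⟨mem_univ _, hP0⟩), ← filter_ne', filter_filter]
    simp_rw [and_comm]
  have htotal := card_filter_add_card_filter_not (s := univ) P
  rw [card_univ, Fintype.card_fun, Fintype.card_fin, hF, pow_add, hcompl, ← hnonzero] at htotal
  have := congrArg (Nat.cast : ℕ → ℤ) htotal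
  push_cast at this
  linarith
end

section
/- Let q be a prime power, k ≥ 1, and let D ⊆ 𝔽_q^k \ {0} be a finite set with n = #D such that aD = D for every a ∈ 𝔽_q^*. Let f be a linear form on 𝔽_q^k, let b ∈ 𝔽_q^*, and set w₀ := #{ x ∈ D : f(x) ≠ 0 }. Then #{ x ∈ D : f(x) + b ≠ 0 } = n − w₀/(q−1), and hence the weight of the codeword of C_{[D,D]~} corresponding to (f,b) satisfies (q−1)·(#{ x ∈ D : f(x) ≠ 0 } + #{ x ∈ D : f(x) + b ≠ 0 }) = (q−1)·n + (q−2)·w₀. -/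
/-!
Fix `c ≠ 0`. Every `x ∈ D` with `f x ≠ 0` is uniquely a nonzero multiple `a • y` of a point
`y ∈ D` on the affine hyperplane `f = c` (take `a = f x / c`), so
`w₀ = (q - 1) · #{x ∈ D : f x = c}`. With `c = -b`, the points of `D` off that hyperplane are
exactly those with `f x + b ≠ 0`, which gives `#{x ∈ D : f x + b ≠ 0} = n - w₀ / (q - 1)`.
-/

section ScalingClosed

variable {F M : Type*} [Field F] [AddCommGroup M] [Module F M]

def unitsProdFiberEquiv (D : Set M) (hD : ∀ a : F, a ≠ 0 → ∀ x ∈ D, a • x ∈ D)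
    (f : M →ₗ[F] F) {c : F} (hc : c ≠ 0) :
    {x // x ∈ D ∧ f x ≠ 0} ≃ Fˣ × {x // x ∈ D ∧ f x = c} where
  toFun x :=
    (Units.mk0 (f x.1 * c⁻¹) (mul_ne_zero x.2.2 (inv_ne_zero hc)),
     ⟨((f x.1)⁻¹ * c) • x.1, hD _ (mul_ne_zero (inv_ne_zero x.2.2) hc) _ x.2.1, by
        rw [map_smul, smul_eq_mul, mul_right_comm, inv_mul_cancel₀ x.2.2, one_mul]⟩)
  invFun p :=
    ⟨(p.1 : F) • p.2.1, hD _ p.1.ne_zero _ p.2.2.1, by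
      rw [map_smul, smul_eq_mul, p.2.2.2]
      exact mul_ne_zero p.1.ne_zero hc⟩
  left_inv := by
    rintro ⟨x, -, hx⟩
    ext1
    simp only [Units.val_mk0, smul_smul]
    rw [show f x * c⁻¹ * ((f x)⁻¹ * c) = 1 by field_simp, one_smul]
  right_inv := by
    rintro ⟨u, y, -, hy⟩
    have hfy : f ((u : F) • y) = u * c := by rw [map_smul, smul_eq_mul, hy]
    refine Prod.ext (Units.ext ?_) (Subtype.ext ?_)
    · simp only [Units.val_mk0, hfy]
      field_simp
    · simp only [hfy, smul_smul]
      rw [show ((u : F) * c)⁻¹ * c * u = 1 by field_simp, one_smul]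

theorem card_ne_zero_eq_mul_card_eq (D : Set M) (hD : ∀ a : F, a ≠ 0 → ∀ x ∈ D, a • x ∈ D)
    (f : M →ₗ[F] F) {c : F} (hc : c ≠ 0) :
    Nat.card {x // x ∈ D ∧ f x ≠ 0} = (Nat.card F - 1) * Nat.card {x // x ∈ D ∧ f x = c} := by
  rw [Nat.card_congr (unitsProdFiberEquiv D hD f hc), Nat.card_prod, Nat.card_units]

end ScalingClosed

theorem Set.card_subtype_and_add_card_subtype_and_not {α : Type*} (D : Set α) [Finite D]
    (p : α → Prop) :
    Nat.card {x // x ∈ D ∧ p x} + Nat.card {x // x ∈ D ∧ ¬p x} = Nat.card D := by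
  classical
  rw [← Nat.card_congr (Equiv.subtypeSubtypeEquivSubtypeInter (· ∈ D) p),
    ← Nat.card_congr (Equiv.subtypeSubtypeEquivSubtypeInter (· ∈ D) (¬p ·)),
    ← Nat.card_sum, Nat.card_congr (Equiv.sumCompl fun x : D => p x)]

theorem stmt15_general (q : ℕ) (F : Type*) [Field F] [Fintype F] (hF : Fintype.card F = q)
    (k : ℕ)
    (D : Set (Fin k → F))
    (hDsc : ∀ a : F, a ≠ 0 → (fun x => a • x) '' D = D)
    (n : ℕ) (hn : n = Nat.card D)
    (f : (Fin k → F) →ₗ[F] F) (b : F) (hb : b ≠ 0)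
    (w0 : ℕ) (hw0 : w0 = Nat.card {x : Fin k → F // x ∈ D ∧ f x ≠ 0}) :
    -- #{x ∈ D : f(x) + b ≠ 0} = n − w₀/(q−1)
    ((q : ℤ) - 1) * (Nat.card {x : Fin k → F // x ∈ D ∧ f x + b ≠ 0} : ℤ)
        = ((q : ℤ) - 1) * n - w0
    ∧
    -- (q−1)·(#{f ≠ 0} + #{f + b ≠ 0}) = (q−1)·n + (q−2)·w₀
    ((q : ℤ) - 1) * ((w0 : ℤ) + (Nat.card {x : Fin k → F // x ∈ D ∧ f x + b ≠ 0} : ℤ))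
        = ((q : ℤ) - 1) * n + ((q : ℤ) - 2) * w0 := by
  have hD : ∀ a : F, a ≠ 0 → ∀ x ∈ D, a • x ∈ D := fun a ha x hx =>
    hDsc a ha ▸ Set.mem_image_of_mem _ hx
  have hq : 1 ≤ q := hF ▸ Fintype.card_pos
  have hw0 : (w0 : ℤ) = (q - 1) * Nat.card {x // x ∈ D ∧ f x = -b} := by
    rw [hw0, card_ne_zero_eq_mul_card_eq D hD f (neg_ne_zero.mpr hb), Nat.card_eq_fintype_card, hF]
    push_cast [hq]
    rfl
  have hoff : {x // x ∈ D ∧ f x + b ≠ 0} ≃ {x // x ∈ D ∧ ¬f x = -b} :=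
    Equiv.subtypeEquivRight fun x => by rw [ne_eq, add_eq_zero_iff_eq_neg]
  have hsplit :
      (Nat.card {x // x ∈ D ∧ f x = -b} : ℤ) + Nat.card {x // x ∈ D ∧ f x + b ≠ 0} = n := by
    rw [Nat.card_congr hoff, hn]
    exact_mod_cast D.card_subtype_and_add_card_subtype_and_not (f · = -b)
  constructor <;> linear_combination (q - 1 : ℤ) * hsplit + hw0

theorem stmt15 (q : ℕ) (F : Type*) [Field F] [Fintype F] (hF : Fintype.card F = q)
    (k : ℕ) (hk : 1 ≤ k)
    (D : Set (Fin k → F)) (hD0 : ∀ x ∈ D, x ≠ 0)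
    (hDsc : ∀ a : F, a ≠ 0 → (fun x => a • x) '' D = D)
    (n : ℕ) (hn : n = Nat.card D)
    (f : (Fin k → F) →ₗ[F] F) (b : F) (hb : b ≠ 0)
    (w0 : ℕ) (hw0 : w0 = Nat.card {x : Fin k → F // x ∈ D ∧ f x ≠ 0}) :
    -- #{x ∈ D : f(x) + b ≠ 0} = n − w₀/(q−1)
    ((q : ℤ) - 1) * (Nat.card {x : Fin k → F // x ∈ D ∧ f x + b ≠ 0} : ℤ)
        = ((q : ℤ) - 1) * n - w0
    ∧
    -- (q−1)·(#{f ≠ 0} + #{f + b ≠ 0}) = (q−1)·n + (q−2)·w₀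
    ((q : ℤ) - 1) * ((w0 : ℤ) + (Nat.card {x : Fin k → F // x ∈ D ∧ f x + b ≠ 0} : ℤ))
        = ((q : ℤ) - 1) * n + ((q : ℤ) - 2) * w0 :=
  stmt15_general q F hF k D hDsc n hn f b hb w0 hw0
end

section
/- Let q be a prime power, k ≥ 1, and let D ⊆ 𝔽_q^k \ {0} be a finite set with n = #D such that aD = D for every a ∈ 𝔽_q^*. For a linear form f on 𝔽_q^k write w₀(f) := #{ x ∈ D : f(x) ≠ 0 }. Then the set of weights of the code C_{[D,D]~}, i.e. the set of values of #{x ∈ D : f(x) ≠ 0} + #{x ∈ D : f(x) + b ≠ 0} as (f,b) ranges over all pairs of a linear form f on 𝔽_q^k and b ∈ 𝔽_q, equals { 2·w₀(f) : f a linear form on 𝔽_q^k } ∪ { n + (q−2)·w₀(f)/(q−1) : f a linear form on 𝔽_q^k }. -/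
/-!
Scaling by `c ≠ 0` maps `D ∩ {f = 1}` bijectively onto `D ∩ {f = c}`, so every nonzero level
set of `f` on `D` has the same size `m`. Hence `w₀(f) = (q - 1) m`, and for `b ≠ 0` the second
summand of the weight is `n - m`, since only the level set `f = -b` is removed; the weight is
`(q - 1) m + n - m = n + (q - 2) w₀(f) / (q - 1)`. For `b = 0` the weight is `2 w₀(f)`.
-/

open Pointwise

section ScalarInvariant

variable {F V : Type*} [Field F] [AddCommGroup V] [Module F V] {D : Set V}

theorem smul_mem_iff_of_image_smul_eq (hD : ∀ a : F, a ≠ 0 → (fun x => a • x) '' D = D)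
    {a : F} (ha : a ≠ 0) {x : V} : a • x ∈ D ↔ x ∈ D := by
  have h := Set.smul_mem_smul_set_iff₀ ha D x
  rwa [← Set.image_smul, hD a ha] at h

theorem card_fiber_eq_card_fiber_one (hD : ∀ a : F, a ≠ 0 → (fun x => a • x) '' D = D)
    (f : V →ₗ[F] F) {c : F} (hc : c ≠ 0) :
    Nat.card {x // x ∈ D ∧ f x = c} = Nat.card {x // x ∈ D ∧ f x = 1} :=
  Nat.card_congr <| (LinearEquiv.smulOfNeZero F V c⁻¹ (inv_ne_zero hc)).toEquiv.subtypeEquiv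
    fun x => by
      simp [smul_mem_iff_of_image_smul_eq hD (inv_ne_zero hc), inv_mul_eq_one₀ hc, eq_comm]

theorem card_ne_zero_eq_mul_card_fiber_one (hD : ∀ a : F, a ≠ 0 → (fun x => a • x) '' D = D)
    (f : V →ₗ[F] F) :
    Nat.card {x // x ∈ D ∧ f x ≠ 0}
      = (Nat.card F - 1) * Nat.card {x // x ∈ D ∧ f x = 1} := by
  rw [← Nat.card_units, ← Nat.card_prod]
  exact Nat.card_congr
    { toFun := fun y => (Units.mk0 (f y) y.2.2, ⟨(f y)⁻¹ • y.1,
        (smul_mem_iff_of_image_smul_eq hD (inv_ne_zero y.2.2)).2 y.2.1, by simp [y.2.2]⟩)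
      invFun := fun p => ⟨(p.1 : F) • p.2.1,
        (smul_mem_iff_of_image_smul_eq hD p.1.ne_zero).2 p.2.2.1, by simp [p.2.2.2]⟩
      left_inv := fun y => by ext; simp [y.2.2]
      right_inv := fun p => by ext <;> simp [p.2.2.2] }

theorem card_add_ne_zero_add_card_fiber_neg (hfin : D.Finite) (f : V →ₗ[F] F) (b : F) :
    Nat.card {x // x ∈ D ∧ f x + b ≠ 0} + Nat.card {x // x ∈ D ∧ f x = -b}
      = Nat.card D := by
  rw [Nat.card_coe_set_eq, ← Set.ncard_inter_add_ncard_sdiff_eq_ncard D {x | f x + b ≠ 0} hfin,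
    ← Nat.card_coe_set_eq, ← Nat.card_coe_set_eq]
  exact congrArg₂ (· + ·) rfl
    (Nat.card_congr (Equiv.subtypeEquivRight fun x => by simp [add_eq_zero_iff_eq_neg]))

theorem card_ne_zero_add_card_add_ne_zero [Finite F]
    (hD : ∀ a : F, a ≠ 0 → (fun x => a • x) '' D = D) (hfin : D.Finite) (f : V →ₗ[F] F)
    {b : F} (hb : b ≠ 0) :
    Nat.card {x // x ∈ D ∧ f x ≠ 0} + Nat.card {x // x ∈ D ∧ f x + b ≠ 0}
      = Nat.card D + (Nat.card F - 2) * Nat.card {x // x ∈ D ∧ f x = 1} := by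
  have hsplit := card_add_ne_zero_add_card_fiber_neg hfin f b
  rw [card_fiber_eq_card_fiber_one hD f (neg_ne_zero.2 hb)] at hsplit
  have hq : Nat.card F - 1 = Nat.card F - 2 + 1 := by
    have := Finite.one_lt_card (α := F)
    omega
  rw [card_ne_zero_eq_mul_card_fiber_one hD f, hq, add_one_mul]
  omega

end ScalarInvariant

theorem stmt16_general (q : ℕ) (F : Type*) [Field F] [Fintype F] (hF : Fintype.card F = q)
    (k : ℕ)
    (D : Set (Fin k → F))
    (hDsc : ∀ a : F, a ≠ 0 → (fun x => a • x) '' D = D)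
    (n : ℕ) (hn : n = Nat.card D) :
    {w : ℕ | ∃ (f : (Fin k → F) →ₗ[F] F) (b : F),
        w = Nat.card {x : Fin k → F // x ∈ D ∧ f x ≠ 0}
          + Nat.card {x : Fin k → F // x ∈ D ∧ f x + b ≠ 0}}
      = {w : ℕ | ∃ f : (Fin k → F) →ₗ[F] F,
            w = 2 * Nat.card {x : Fin k → F // x ∈ D ∧ f x ≠ 0}}
        ∪ {w : ℕ | ∃ f : (Fin k → F) →ₗ[F] F,
            w = n + (q - 2) * Nat.card {x : Fin k → F // x ∈ D ∧ f x ≠ 0} / (q - 1)} := by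
  have hweight : ∀ (f : (Fin k → F) →ₗ[F] F) (b : F), b ≠ 0 →
      Nat.card {x : Fin k → F // x ∈ D ∧ f x ≠ 0}
          + Nat.card {x : Fin k → F // x ∈ D ∧ f x + b ≠ 0}
        = n + (q - 2) * Nat.card {x : Fin k → F // x ∈ D ∧ f x ≠ 0} / (q - 1) := by
    intro f b hb
    have hq : 0 < q - 1 := by
      have := Fintype.one_lt_card (α := F)
      omega
    rw [card_ne_zero_add_card_add_ne_zero hDsc D.toFinite f hb,
      card_ne_zero_eq_mul_card_fiber_one hDsc f, Nat.card_eq_fintype_card (α := F), hF, hn,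
      mul_left_comm, Nat.mul_div_cancel_left _ hq]
  ext w
  constructor
  · rintro ⟨f, b, rfl⟩
    rcases eq_or_ne b 0 with rfl | hb
    · exact Or.inl ⟨f, by simp [two_mul]⟩
    · exact Or.inr ⟨f, hweight f b hb⟩
  · rintro (⟨f, rfl⟩ | ⟨f, rfl⟩)
    · exact ⟨f, 0, by simp [two_mul]⟩
    · exact ⟨f, 1, (hweight f 1 one_ne_zero).symm⟩

theorem stmt16 (q : ℕ) (F : Type*) [Field F] [Fintype F] (hF : Fintype.card F = q)
    (k : ℕ) (hk : 1 ≤ k)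
    (D : Set (Fin k → F)) (hD0 : ∀ x ∈ D, x ≠ 0)
    (hDsc : ∀ a : F, a ≠ 0 → (fun x => a • x) '' D = D)
    (n : ℕ) (hn : n = Nat.card D) :
    {w : ℕ | ∃ (f : (Fin k → F) →ₗ[F] F) (b : F),
        w = Nat.card {x : Fin k → F // x ∈ D ∧ f x ≠ 0}
          + Nat.card {x : Fin k → F // x ∈ D ∧ f x + b ≠ 0}}
      = {w : ℕ | ∃ f : (Fin k → F) →ₗ[F] F,
            w = 2 * Nat.card {x : Fin k → F // x ∈ D ∧ f x ≠ 0}}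
        ∪ {w : ℕ | ∃ f : (Fin k → F) →ₗ[F] F,
            w = n + (q - 2) * Nat.card {x : Fin k → F // x ∈ D ∧ f x ≠ 0} / (q - 1)} :=
  stmt16_general q F hF k D hDsc n hn
end
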